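/- arXiv:2211.00343 — 8 statements merged into one kernel-verified Lean document; each statement's English description precedes it below -/
import Mathlib

section
/- For functions f_1,...,f_p : X → ℝ, one has δ_{p-1}(Alt_p(f_1 ⊗ ··· ⊗ f_p)) = (p+1) Alt_{p+1}(1 ⊗ f_1 ⊗ ··· ⊗ f_p), where 1 denotes the constant function 1 on X. -/
open Finset

/-- Symmetrizer of order `p`. -/
noncomputable def symAvg {X : Type*} (p : ℕ) (F : (Fin p → X) → ℝ) : (Fin p → X) → ℝ :=
  fun x => (p.factorial : ℝ)⁻¹ * ∑ σ : Equiv.Perm (Fin p), F (x ∘ σ)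

/-- Antisymmetrizer of order `p`. -/
noncomputable def altAvg {X : Type*} (p : ℕ) (F : (Fin p → X) → ℝ) : (Fin p → X) → ℝ :=
  fun x => (p.factorial : ℝ)⁻¹ * ∑ σ : Equiv.Perm (Fin p), ((Equiv.Perm.sign σ : ℤ) : ℝ) * F (x ∘ σ)

/-- Kolmogorov-Alexander-Spanier coboundary operator. -/
def cob {X : Type*} {p : ℕ} (F : (Fin p → X) → ℝ) : (Fin (p + 1) → X) → ℝ :=
  fun x => ∑ i : Fin (p + 1), (-1 : ℝ) ^ (i : ℕ) * F (x ∘ i.succAbove)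

/-- Tensor product of `p` scalar functions. -/
def tensorF {X : Type*} {p : ℕ} (f : Fin p → X → ℝ) : (Fin p → X) → ℝ :=
  fun x => ∏ i, f i (x i)

/-- A function of `p` variables is symmetric. -/
def IsSymmF {X : Type*} {p : ℕ} (F : (Fin p → X) → ℝ) : Prop :=
  ∀ σ : Equiv.Perm (Fin p), ∀ x, F (x ∘ σ) = F x

/-- A function of `p` variables is antisymmetric. -/
def IsAntisymmF {X : Type*} {p : ℕ} (F : (Fin p → X) → ℝ) : Prop :=
  ∀ σ : Equiv.Perm (Fin p), ∀ x, F (x ∘ σ) = ((Equiv.Perm.sign σ : ℤ) : ℝ) * F x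

/-- The averaged coefficient `ḡ`. -/
noncomputable def gbar {X : Type*} (p : ℕ) (g : X → ℝ) : (Fin (p + 1) → X) → ℝ :=
  fun x => ((p : ℝ) + 1)⁻¹ * ∑ i, g (x i)

-- the bijection
def Phi {p : ℕ} (q : Fin (p + 1) × Equiv.Perm (Fin p)) : Equiv.Perm (Fin (p + 1)) :=
  (q.1.cycleRange)⁻¹ * Equiv.Perm.decomposeFin.symm (0, q.2)

lemma Phi_zero {p : ℕ} (q : Fin (p + 1) × Equiv.Perm (Fin p)) : Phi q 0 = q.1 := by
  simp [Phi, Equiv.Perm.mul_apply, Equiv.Perm.inv_def]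

lemma Phi_succ {p : ℕ} (q : Fin (p + 1) × Equiv.Perm (Fin p)) (j : Fin p) :
    Phi q j.succ = q.1.succAbove (q.2 j) := by
  simp [Phi, Equiv.Perm.mul_apply, Equiv.Perm.inv_def, Equiv.Perm.decomposeFin_symm_apply_succ]

lemma Phi_sign {p : ℕ} (q : Fin (p + 1) × Equiv.Perm (Fin p)) :
    Equiv.Perm.sign (Phi q) = (-1) ^ (q.1 : ℕ) * Equiv.Perm.sign q.2 := by
  simp [Phi, Equiv.Perm.decomposeFin.symm_sign]

lemma Phi_bij (p : ℕ) : Function.Bijective (Phi (p := p)) := by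
  rw [Fintype.bijective_iff_injective_and_card]
  constructor
  · intro q q' h
    have h0 : q.1 = q'.1 := by rw [← Phi_zero q, ← Phi_zero q', h]
    have h2 : q.2 = q'.2 := Equiv.ext fun j => by
      have := congrArg (fun τ : Equiv.Perm (Fin (p+1)) => τ j.succ) h
      simp only [Phi_succ, h0] at this
      exact q'.1.succAbove_right_injective this
    exact Prod.ext h0 h2
  · simp [Fintype.card_perm, Nat.factorial_succ, mul_comm]

theorem stmt6 {X : Type*} (p : ℕ) (hp : 1 ≤ p) (f : Fin p → X → ℝ) :
    cob (altAvg p (tensorF f)) = fun x =>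
      ((p : ℝ) + 1) * altAvg (p + 1) (tensorF (Fin.cons (fun _ => (1 : ℝ)) f)) x := by
  funext x
  simp only [cob, altAvg, tensorF]
  have key : ∑ q : Fin (p + 1) × Equiv.Perm (Fin p),
      (-1 : ℝ) ^ (q.1 : ℕ) * (((Equiv.Perm.sign q.2 : ℤ) : ℝ) *
        ∏ j, f j (x (q.1.succAbove (q.2 j))))
      = ∑ τ : Equiv.Perm (Fin (p + 1)),
        ((Equiv.Perm.sign τ : ℤ) : ℝ) * ∏ k, (Fin.cons (fun _ => (1:ℝ)) f : Fin (p+1) → X → ℝ) k (x (τ k)) := by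
    refine Fintype.sum_bijective Phi (Phi_bij p) _ _ ?_
    intro q
    rw [Fin.prod_univ_succ]
    simp only [Fin.cons_zero, Fin.cons_succ, Phi_succ, Phi_sign, one_mul]
    push_cast
    ring
  calc ∑ i : Fin (p + 1), (-1 : ℝ) ^ (i : ℕ) *
        ((p.factorial : ℝ)⁻¹ * ∑ σ : Equiv.Perm (Fin p),
          ((Equiv.Perm.sign σ : ℤ) : ℝ) * ∏ j, f j ((x ∘ i.succAbove ∘ σ) j))
      = (p.factorial : ℝ)⁻¹ * ∑ q : Fin (p + 1) × Equiv.Perm (Fin p),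
          (-1 : ℝ) ^ (q.1 : ℕ) * (((Equiv.Perm.sign q.2 : ℤ) : ℝ) *
            ∏ j, f j (x (q.1.succAbove (q.2 j)))) := by
        rw [Fintype.sum_prod_type]
        simp only [Finset.mul_sum, Function.comp_apply]
        exact Finset.sum_congr rfl fun i _ => Finset.sum_congr rfl fun σ _ => by ring
    _ = ((p : ℝ) + 1) * (((p + 1).factorial : ℝ)⁻¹ *
          ∑ τ : Equiv.Perm (Fin (p + 1)), ((Equiv.Perm.sign τ : ℤ) : ℝ) *
            ∏ k, (Fin.cons (fun _ => (1:ℝ)) f : Fin (p+1) → X → ℝ) k ((x ∘ τ) k)) := by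
        rw [key]
        simp only [Function.comp_apply]
        rw [← mul_assoc]
        congr 1
        rw [Nat.factorial_succ]
        push_cast
        rw [mul_inv]
        field_simp
end

section
/- For functions f_1,...,f_p : X → ℝ and points x_0,x_1,...,x_p ∈ X, the antisymmetrized coboundary equals a determinant of differences: δ_{p-1}(Alt_p(f_1 ⊗ ··· ⊗ f_p))(x_0,x_1,...,x_p) = (1/p!) det[(f_i(x_j) − f_i(x_0))_{i,j=1}^{p}]. -/
open Finset

theorem stmt7 {X : Type*} (p : ℕ) (hp : 1 ≤ p) (f : Fin p → X → ℝ)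
    (x : Fin (p + 1) → X) :
    cob (altAvg p (tensorF f)) x =
      (p.factorial : ℝ)⁻¹ *
        Matrix.det (Matrix.of fun i j : Fin p => f i (x j.succ) - f i (x 0)) := by
  classical
  have halt : ∀ y : Fin p → X,
      altAvg p (tensorF f) y
        = (p.factorial : ℝ)⁻¹ * Matrix.det (Matrix.of fun i k : Fin p => f i (y k)) := by
    intro y
    unfold altAvg tensorF
    congr 1
    rw [← Matrix.det_transpose, Matrix.det_apply']
    simp [Function.comp, Matrix.transpose]
  set A : Matrix (Fin (p+1)) (Fin (p+1)) ℝ :=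
    Matrix.of (Fin.cons (fun _ => (1:ℝ)) (fun i j => f i (x j))) with hA
  set C : Matrix (Fin (p+1)) (Fin (p+1)) ℝ :=
    Matrix.of (fun i j => (if j = i then (1:ℝ) else 0) + (if i = 0 ∧ j ≠ 0 then -1 else 0)) with hC
  have hdetC : C.det = 1 := by
    rw [Matrix.det_of_upperTriangular]
    · simp [hC]
    · intro i j hij
      simp only [hC, Matrix.of_apply]
      rw [if_neg (show j ≠ i from ne_of_lt hij), if_neg]
      · ring
      · rintro ⟨rfl, _⟩; exact absurd hij (by simp)
  have hAC : ∀ i j, (A * C) i j = A i j - (if j = 0 then 0 else A i 0) := by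
    intro i j
    rw [Matrix.mul_apply]
    simp only [hC, Matrix.of_apply, mul_add, Finset.sum_add_distrib, mul_ite, mul_one, mul_zero,
      mul_neg, Finset.sum_ite_eq, Finset.mem_univ, if_true]
    by_cases h : j = 0 <;> simp [h, Finset.sum_ite_eq']
    ring
  -- LHS
  have hlhs : cob (altAvg p (tensorF f)) x = (p.factorial : ℝ)⁻¹ * A.det := by
    unfold cob
    rw [Matrix.det_succ_row_zero, Finset.mul_sum]
    refine Finset.sum_congr rfl fun j _ => ?_
    rw [halt]
    have h0 : A 0 j = 1 := by simp [hA]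
    have hsub : (A.submatrix Fin.succ j.succAbove) = Matrix.of fun i k : Fin p => f i ((x ∘ j.succAbove) k) := by
      ext i k; simp [hA, Matrix.submatrix_apply]
    rw [h0, hsub]
    ring
  -- RHS
  have hrhs : A.det = Matrix.det (Matrix.of fun i j : Fin p => f i (x j.succ) - f i (x 0)) := by
    have h1 : A.det = (A * C).det := by rw [Matrix.det_mul, hdetC, mul_one]
    rw [h1, Matrix.det_succ_row_zero]
    rw [Finset.sum_eq_single 0]
    · have h00 : (A * C) 0 0 = 1 := by rw [hAC]; simp [hA]
      rw [h00]
      have : ((A * C).submatrix Fin.succ (0 : Fin (p+1)).succAbove)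
          = Matrix.of fun i j : Fin p => f i (x j.succ) - f i (x 0) := by
        ext i k
        simp only [Matrix.submatrix_apply, Fin.succAbove_zero]
        rw [hAC]
        simp [hA, Fin.succ_ne_zero]
      rw [this]
      simp
    · intro j _ hj
      have : (A * C) 0 j = 0 := by
        rw [hAC, if_neg hj]
        simp [hA]
      rw [this]; ring
    · simp
  rw [hlhs, hrhs]
end

section
/- For functions f_1,...,f_p : X → ℝ and any point x_0 ∈ X, δ_{p-1}(Alt_p(f_1 ⊗ ··· ⊗ f_p))(x_0,x_1,...,x_p) = Alt_p(δ_0f_1(x_0,·) ⊗ ··· ⊗ δ_0f_p(x_0,·))(x_1,...,x_p), where δ_0f(x_0,y) = f(y) − f(x_0). -/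
open Finset

/-- Signed sum over permutations is a determinant (row-major orientation). -/
lemma sum_perm_eq_det {p : ℕ} (M : Matrix (Fin p) (Fin p) ℝ) :
    ∑ σ : Equiv.Perm (Fin p), ((Equiv.Perm.sign σ : ℤ) : ℝ) * ∏ i, M i (σ i) = M.det := by
  rw [← Matrix.det_transpose, Matrix.det_apply']
  simp [Matrix.transpose_apply]

theorem stmt8 {X : Type*} (p : ℕ) (hp : 1 ≤ p) (f : Fin p → X → ℝ)
    (x : Fin (p + 1) → X) :
    cob (altAvg p (tensorF f)) x =
      altAvg p (tensorF fun i y => f i y - f i (x 0)) (fun j : Fin p => x j.succ) := by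
  classical
  set B : Matrix (Fin (p + 1)) (Fin (p + 1)) ℝ :=
    Matrix.of fun i j => Fin.cases 1 (fun k => f k (x j)) i with hB
  set D : Matrix (Fin p) (Fin p) ℝ :=
    Matrix.of fun i j => f i (x j.succ) - f i (x 0) with hD
  have hL : cob (altAvg p (tensorF f)) x = (p.factorial : ℝ)⁻¹ * B.det := by
    rw [Matrix.det_succ_row_zero, Finset.mul_sum]
    unfold cob altAvg tensorF
    refine Finset.sum_congr rfl fun j _ => ?_
    rw [← sum_perm_eq_det (B.submatrix Fin.succ j.succAbove)]
    simp [hB, Function.comp, mul_comm, Finset.mul_sum, mul_left_comm]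
  have hR : altAvg p (tensorF fun i y => f i y - f i (x 0)) (fun j : Fin p => x j.succ)
      = (p.factorial : ℝ)⁻¹ * D.det := by
    unfold altAvg tensorF
    rw [← sum_perm_eq_det D]
    simp [hD, Function.comp]
  have hBD : B.det = D.det := by
    set C : Matrix (Fin (p + 1)) (Fin (p + 1)) ℝ :=
      Matrix.of fun i j => if j = 0 then B i 0 else B i j - B i 0 with hC
    have h1 : B.det = C.det := by
      rw [← Matrix.det_transpose B, ← Matrix.det_transpose C]
      refine Matrix.det_eq_of_forall_row_eq_smul_add_const
        (fun j => if j = 0 then 0 else 1) 0 (by simp) fun j i => ?_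
      by_cases hj : j = 0 <;> simp [hC, hj, Matrix.transpose_apply]
    have h2 : C.det = D.det := by
      rw [Matrix.det_succ_row_zero]
      rw [Finset.sum_eq_single 0]
      · have hsub : C.submatrix Fin.succ ((0 : Fin (p + 1)).succAbove) = D := by
          ext i j
          have h0 : ((0 : Fin (p + 1)).succAbove j) = j.succ := rfl
          simp [hC, hB, hD, h0, Fin.succ_ne_zero]
        rw [hsub]
        simp [hC, hB]
      · intro j _ hj
        have : C 0 j = 0 := by
          obtain ⟨k, rfl⟩ := Fin.exists_succ_eq.2 hj
          simp [hC, hB, Fin.succ_ne_zero]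
        simp [this]
      · simp
    rw [h1, h2]
  rw [hL, hR, hBD]
end

section
/- Let g : X → ℝ and f_1,...,f_p : X → ℝ, and let ḡ(x_0,...,x_p) := (1/(p+1)) ∑_{i=0}^{p} g(x_i). Then ḡ · δ_{p-1}Alt_p(f_1 ⊗ ··· ⊗ f_p) = Alt_{p+1}(g ⊗ f_1 ⊗ ··· ⊗ f_p) + (1/(p+1)) ∑_{k=1}^{p} δ_{p-1}Alt_p(f_1 ⊗ ··· ⊗ (g·f_k) ⊗ ··· ⊗ f_p). -/
open Finset

lemma lem1 {X : Type*} (p : ℕ) (g : X → ℝ) (f : Fin p → X → ℝ) (y : Fin p → X) :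
    ∑ k : Fin p, altAvg p (tensorF (Function.update f k fun z => g z * f k z)) y
      = (∑ m, g (y m)) * altAvg p (tensorF f) y := by
  unfold altAvg tensorF
  simp only [Function.comp]
  have key : ∀ σ : Equiv.Perm (Fin p),
      ∑ k : Fin p, ∏ i, (Function.update f k fun z => g z * f k z) i (y (σ i))
        = (∑ m, g (y m)) * ∏ i, f i (y (σ i)) := by
    intro σ
    have h1 : ∀ k : Fin p,
        ∏ i, (Function.update f k fun z => g z * f k z) i (y (σ i))
          = g (y (σ k)) * ∏ i, f i (y (σ i)) := by
      intro k
      have h2 : ∀ i, (Function.update f k fun z => g z * f k z) i (y (σ i))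
          = Function.update (fun i => f i (y (σ i))) k (g (y (σ k)) * f k (y (σ k))) i := by
        intro i
        rcases eq_or_ne i k with rfl | hik
        · simp
        · simp [Function.update_of_ne hik]
      rw [Finset.prod_congr rfl (fun i _ => h2 i),
        Finset.prod_update_of_mem (Finset.mem_univ k),
        ← Finset.mul_prod_erase Finset.univ _ (Finset.mem_univ k),
        Finset.sdiff_singleton_eq_erase]
      ring
    rw [Finset.sum_congr rfl (fun k _ => h1 k), ← Finset.sum_mul]
    congr 1
    exact Equiv.sum_comp σ fun m => g (y m)
  rw [← Finset.mul_sum, Finset.sum_comm]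
  have h3 : ∀ σ : Equiv.Perm (Fin p),
      ∑ k : Fin p, ((Equiv.Perm.sign σ : ℤ) : ℝ) *
          ∏ i, (Function.update f k fun z => g z * f k z) i (y (σ i))
        = ((Equiv.Perm.sign σ : ℤ) : ℝ) * ((∑ m, g (y m)) * ∏ i, f i (y (σ i))) := by
    intro σ
    rw [← Finset.mul_sum, key σ]
  rw [Finset.sum_congr rfl (fun σ _ => h3 σ)]
  have h4 : ∑ σ : Equiv.Perm (Fin p), ((Equiv.Perm.sign σ : ℤ) : ℝ) *
        ((∑ m, g (y m)) * ∏ i, f i (y (σ i)))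
      = (∑ m, g (y m)) * ∑ σ : Equiv.Perm (Fin p),
          ((Equiv.Perm.sign σ : ℤ) : ℝ) * ∏ i, f i (y (σ i)) := by
    rw [Finset.mul_sum]
    exact Finset.sum_congr rfl fun σ _ => by ring
  rw [h4]
  ring

lemma lem2 {X : Type*} (p : ℕ) (g : X → ℝ) (f : Fin p → X → ℝ) (x : Fin (p + 1) → X) :
    altAvg (p + 1) (tensorF (Fin.cons g f)) x
      = ((p : ℝ) + 1)⁻¹ * ∑ j : Fin (p + 1), (-1 : ℝ) ^ (j : ℕ) *
          (g (x j) * altAvg p (tensorF f) (x ∘ j.succAbove)) := by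
  classical
  set e : Fin (p + 1) × Equiv.Perm (Fin p) → Equiv.Perm (Fin (p + 1)) :=
    fun js => (Fin.cycleRange js.1)⁻¹ * Equiv.Perm.decomposeFin.symm (0, js.2) with he
  have he0 : ∀ j σ, e (j, σ) 0 = j := by
    intro j σ
    simp [he, Equiv.Perm.mul_apply, Equiv.Perm.inv_def, Fin.cycleRange_symm_zero]
  have hes : ∀ j σ (i : Fin p), e (j, σ) i.succ = j.succAbove (σ i) := by
    intro j σ i
    simp [he, Equiv.Perm.mul_apply, Equiv.Perm.inv_def, Fin.cycleRange_symm_succ]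
  have hsign : ∀ j σ, ((Equiv.Perm.sign (e (j, σ)) : ℤ) : ℝ)
      = (-1 : ℝ) ^ (j : ℕ) * ((Equiv.Perm.sign σ : ℤ) : ℝ) := by
    intro j σ
    have : Equiv.Perm.sign (e (j, σ)) = (-1) ^ (j : ℕ) * Equiv.Perm.sign σ := by
      simp [he, Fin.sign_cycleRange]
    rw [this]
    push_cast
    ring
  have hbij : Function.Bijective e := by
    rw [Fintype.bijective_iff_injective_and_card]
    constructor
    · rintro ⟨j, σ⟩ ⟨j', σ'⟩ h
      have hj : j = j' := by rw [← he0 j σ, ← he0 j' σ', h]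
      subst hj
      have hσ : σ = σ' := Equiv.ext fun i => by
        have := congrArg (fun τ : Equiv.Perm (Fin (p+1)) => τ i.succ) h
        simp only [hes] at this
        exact Fin.succAbove_right_injective this
      rw [hσ]
    · simp [Fintype.card_perm, Nat.factorial_succ]
  have hsum := Fintype.sum_bijective e hbij
    (fun js => ((Equiv.Perm.sign (e js) : ℤ) : ℝ) * tensorF (Fin.cons g f) (x ∘ (e js)))
    (fun τ => ((Equiv.Perm.sign τ : ℤ) : ℝ) * tensorF (Fin.cons g f) (x ∘ τ))
    (fun js => rfl)
  unfold altAvg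
  rw [← hsum, Fintype.sum_prod_type]
  have hterm : ∀ j σ, ((Equiv.Perm.sign (e (j, σ)) : ℤ) : ℝ) * tensorF (Fin.cons g f) (x ∘ (e (j, σ)))
      = (-1 : ℝ) ^ (j : ℕ) * g (x j) *
        (((Equiv.Perm.sign σ : ℤ) : ℝ) * ∏ i, f i (x (j.succAbove (σ i)))) := by
    intro j σ
    rw [hsign]
    unfold tensorF
    rw [Fin.prod_univ_succ]
    simp only [Function.comp, Fin.cons_zero, Fin.cons_succ, he0, hes]
    ring
  simp only [hterm]
  unfold tensorF
  simp only [Function.comp]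
  have hfact : ((p + 1).factorial : ℝ)⁻¹ = ((p : ℝ) + 1)⁻¹ * ((p.factorial : ℝ))⁻¹ := by
    rw [Nat.factorial_succ]
    push_cast
    rw [mul_inv]
  rw [hfact, mul_assoc]
  congr 1
  rw [Finset.mul_sum]
  refine Finset.sum_congr rfl fun j _ => ?_
  have hin : ∑ σ : Equiv.Perm (Fin p),
      (-1 : ℝ) ^ (j : ℕ) * g (x j) *
        (((Equiv.Perm.sign σ : ℤ) : ℝ) * ∏ i, f i (x (j.succAbove (σ i))))
      = (-1 : ℝ) ^ (j : ℕ) * g (x j) * ∑ σ : Equiv.Perm (Fin p),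
          ((Equiv.Perm.sign σ : ℤ) : ℝ) * ∏ i, f i (x (j.succAbove (σ i))) := by
    rw [Finset.mul_sum]
  rw [hin]
  ring

theorem stmt9 {X : Type*} (p : ℕ) (hp : 1 ≤ p) (g : X → ℝ) (f : Fin p → X → ℝ) :
    (fun x => gbar p g x * cob (altAvg p (tensorF f)) x) = fun x =>
      altAvg (p + 1) (tensorF (Fin.cons g f)) x +
        ((p : ℝ) + 1)⁻¹ * ∑ k : Fin p,
          cob (altAvg p (tensorF (Function.update f k fun y => g y * f k y))) x := by
  funext x
  rw [lem2]
  unfold gbar cob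
  have hswap : ∑ k : Fin p, ∑ j : Fin (p + 1), (-1 : ℝ) ^ (j : ℕ) *
        altAvg p (tensorF (Function.update f k fun y => g y * f k y)) (x ∘ j.succAbove)
      = ∑ j : Fin (p + 1), (-1 : ℝ) ^ (j : ℕ) *
          ((∑ m, g (x (j.succAbove m))) * altAvg p (tensorF f) (x ∘ j.succAbove)) := by
    rw [Finset.sum_comm]
    refine Finset.sum_congr rfl fun j _ => ?_
    rw [← Finset.mul_sum, lem1 p g f (x ∘ j.succAbove)]
    simp only [Function.comp]
  rw [hswap]
  rw [← mul_add, ← Finset.sum_add_distrib, mul_assoc]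
  congr 1
  rw [Finset.mul_sum]
  refine Finset.sum_congr rfl fun j _ => ?_
  rw [Fin.sum_univ_succAbove (fun i => g (x i)) j]
  ring
end

section
/- Let g : X → ℝ and f_1,...,f_p : X → ℝ, and let ḡ(x_0,...,x_p) := (1/(p+1)) ∑_{i=0}^{p} g(x_i). Then δ_p(ḡ · δ_{p-1}Alt_p(f_1 ⊗ ··· ⊗ f_p)) = δ_p Alt_{p+1}(g ⊗ f_1 ⊗ ··· ⊗ f_p). -/
open Finset

/-!
Laplace expansion along the first column writes `Alt_{p+1}(g ⊗ f)(x)` as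
`(p+1)⁻¹ ∑ᵢ (-1)^i g(xᵢ) Alt_p(f)(x without xᵢ)`. In `ḡ · δ Alt_p(f)`, splitting
`∑ⱼ g(xⱼ) = g(xᵢ) + ∑_{j ≠ i} g(xⱼ)` in the `i`-th face term gives the same sum plus
`(p+1)⁻¹ δ(S · Alt_p f)` with `S(y) = ∑ₖ g(yₖ)`, which `δ ∘ δ = 0` kills.
-/

lemma neg_one_pow_succAbove_add_predAbove {R : Type*} [CommRing R] {n : ℕ} (i : Fin (n + 2))
    (j : Fin (n + 1)) :
    (-1 : R) ^ ((i.succAbove j : ℕ) + (j.predAbove i : ℕ)) = -(-1) ^ ((i : ℕ) + j) := by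
  rcases lt_or_ge j.castSucc i with h | h
  · rw [Fin.succAbove_of_castSucc_lt _ _ h, Fin.predAbove_of_castSucc_lt _ _ h]
    obtain ⟨m, hm⟩ : ∃ m, (i : ℕ) = m + 1 :=
      ⟨(i : ℕ) - 1, by rw [Fin.lt_def, Fin.val_castSucc] at h; omega⟩
    simp only [Fin.val_castSucc, Fin.val_pred, hm, Nat.add_sub_cancel, pow_add]
    ring
  · rw [Fin.succAbove_of_le_castSucc _ _ h, Fin.predAbove_of_le_castSucc _ _ h]
    simp only [Fin.val_succ, Fin.coe_castPred, pow_add]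
    ring

section

variable {X : Type*}

lemma cob_cob {p : ℕ} (F : (Fin p → X) → ℝ) : cob (cob F) = 0 := by
  funext x
  set T : Fin (p + 2) × Fin (p + 1) → ℝ := fun q =>
    (-1) ^ ((q.1 : ℕ) + q.2) * F (x ∘ q.1.succAbove ∘ q.2.succAbove)
  set σ : Fin (p + 2) × Fin (p + 1) → Fin (p + 2) × Fin (p + 1) := fun q =>
    (q.1.succAbove q.2, q.2.predAbove q.1)
  -- `σ` swaps the roles of the two deleted indices: same face, opposite sign.
  have hσ : Function.Involutive σ := fun q =>
    Prod.ext (Fin.succAbove_succAbove_predAbove _ _) (Fin.predAbove_predAbove_succAbove _ _)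
  have hT : ∀ q, T (σ q) = -T q := fun q => by
    simp only [T, σ, neg_one_pow_succAbove_add_predAbove, neg_mul]
    congr 3
    funext k
    exact congrArg x (Fin.succAbove_succAbove_succAbove_predAbove _ _ _)
  have hsum : cob (cob F) x = ∑ q, T q := by
    simp only [cob, Fintype.sum_prod_type, Finset.mul_sum, T, pow_add, mul_assoc]
    rfl
  have : ∑ q, T q = -∑ q, T q := by
    rw [← Finset.sum_neg_distrib, ← Equiv.sum_comp hσ.toPerm]
    exact Finset.sum_congr rfl fun q _ => hT q
  rw [hsum, Pi.zero_apply]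
  linarith

lemma cob_add {p : ℕ} (F G : (Fin p → X) → ℝ) : cob (F + G) = cob F + cob G := by
  funext x
  simp only [cob, Pi.add_apply, mul_add, Finset.sum_add_distrib]

lemma cob_smul {p : ℕ} (c : ℝ) (F : (Fin p → X) → ℝ) : cob (c • F) = c • cob F := by
  funext x
  simp only [cob, Pi.smul_apply, smul_eq_mul, Finset.mul_sum]
  exact Finset.sum_congr rfl fun i _ => by ring

lemma gbar_mul_cob {p : ℕ} (g : X → ℝ) (A : (Fin p → X) → ℝ) (x : Fin (p + 1) → X) :
    gbar p g x * cob A x = ((p : ℝ) + 1)⁻¹ *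
      (∑ i : Fin (p + 1), (-1) ^ (i : ℕ) * (g (x i) * A (x ∘ i.succAbove)) +
        cob (fun y => (∑ k, g (y k)) * A y) x) := by
  rw [gbar, mul_assoc, cob, cob, Finset.mul_sum, ← Finset.sum_add_distrib]
  congr 1
  refine Finset.sum_congr rfl fun j _ => ?_
  rw [Fin.sum_univ_succAbove (fun i => g (x i)) j]
  simp only [Function.comp_apply]
  ring

lemma altAvg_tensorF_eq_det (p : ℕ) (f : Fin p → X → ℝ) (x : Fin p → X) :
    altAvg p (tensorF f) x = (p.factorial : ℝ)⁻¹ * (Matrix.of fun i j => f j (x i)).det := by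
  rw [altAvg, Matrix.det_apply]
  congr 1
  refine Finset.sum_congr rfl fun σ _ => ?_
  rw [Units.smul_def, zsmul_eq_mul]
  rfl

lemma altAvg_tensorF_cons (p : ℕ) (g : X → ℝ) (f : Fin p → X → ℝ)
    (x : Fin (p + 1) → X) :
    altAvg (p + 1) (tensorF (Fin.cons g f)) x = ((p : ℝ) + 1)⁻¹ *
      ∑ i : Fin (p + 1),
        (-1) ^ (i : ℕ) * (g (x i) * altAvg p (tensorF f) (x ∘ i.succAbove)) := by
  simp only [altAvg_tensorF_eq_det, Matrix.det_succ_column_zero, Nat.factorial_succ,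
    Nat.cast_mul, Nat.cast_succ, mul_inv, mul_assoc, Finset.mul_sum]
  refine Finset.sum_congr rfl fun i _ => ?_
  simp only [Matrix.of_apply, Fin.cons_zero, Fin.cons_succ, Matrix.submatrix, Function.comp_apply]
  ring

end

theorem stmt10_general {X : Type*} (p : ℕ) (g : X → ℝ) (f : Fin p → X → ℝ) :
    cob (fun x => gbar p g x * cob (altAvg p (tensorF f)) x) =
      cob (altAvg (p + 1) (tensorF (Fin.cons g f))) := by
  have leibniz : (fun x => gbar p g x * cob (altAvg p (tensorF f)) x) =
      altAvg (p + 1) (tensorF (Fin.cons g f)) +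
        ((p : ℝ) + 1)⁻¹ • cob (fun y => (∑ k, g (y k)) * altAvg p (tensorF f) y) := by
    funext x
    rw [Pi.add_apply, Pi.smul_apply, smul_eq_mul, gbar_mul_cob, altAvg_tensorF_cons, mul_add]
  rw [leibniz, cob_add, cob_smul, cob_cob, smul_zero, add_zero]

theorem stmt10 {X : Type*} (p : ℕ) (hp : 1 ≤ p) (g : X → ℝ) (f : Fin p → X → ℝ) :
    cob (fun x => gbar p g x * cob (altAvg p (tensorF f)) x) =
      cob (altAvg (p + 1) (tensorF (Fin.cons g f))) :=
  stmt10_general p g f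
end

section
/- For functions f_0,...,f_p, χ : X → ℝ and points x_0,...,x_{p+1} ∈ X, δ_p(χ^{⊗(p+1)} · Alt_{p+1}(f_0⊗···⊗f_p))(x_0,...,x_{p+1}) = χ(x_1)···χ(x_{p+1}) · δ_pAlt_{p+1}(f_0⊗···⊗f_p)(x_0,...,x_{p+1}) + ∑_{k=1}^{p+1} (-1)^{k-1} χ(x_1)···χ(x_{k-1}) (χ(x_k)−χ(x_0)) χ(x_{k+1})···χ(x_{p+1}) · Alt_{p+1}(f_0⊗···⊗f_p)(x_0,...,x̂_k,...,x_{p+1}). -/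
open Finset

lemma aux_prod_succAbove {p : ℕ} (h : Fin (p + 1) → ℝ) (k : Fin (p + 1)) :
    ∏ j : Fin p, h (k.succAbove j) =
      (∏ j ∈ Finset.univ.filter (fun j => j < k), h j) *
        ∏ j ∈ Finset.univ.filter (fun j => k < j), h j := by
  have hmap : (Finset.univ : Finset (Fin p)).map k.succAboveEmb =
      Finset.univ.filter (fun j => j ≠ k) := by
    ext j
    simp only [Finset.mem_map, Finset.mem_univ, true_and, Finset.mem_filter,
      Fin.succAboveEmb]
    constructor
    · rintro ⟨i, rfl⟩
      exact Fin.succAbove_ne k i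
    · intro hj
      exact Fin.exists_succAbove_eq hj
  have hsplit : Finset.univ.filter (fun j : Fin (p + 1) => j ≠ k) =
      Finset.univ.filter (fun j => j < k) ∪ Finset.univ.filter (fun j => k < j) := by
    ext j
    simp only [Finset.mem_filter, Finset.mem_univ, true_and, Finset.mem_union,
      ne_iff_lt_or_gt]
  have hdisj : Disjoint (Finset.univ.filter (fun j : Fin (p + 1) => j < k))
      (Finset.univ.filter (fun j => k < j)) := by
    rw [Finset.disjoint_filter]
    intro a _ h1 h2
    exact absurd (h1.trans h2) (lt_irrefl a)
  calc ∏ j : Fin p, h (k.succAbove j)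
      = ∏ j ∈ (Finset.univ : Finset (Fin p)).map k.succAboveEmb, h j := by
        rw [Finset.prod_map]; rfl
    _ = _ := by rw [hmap, hsplit, Finset.prod_union hdisj]

lemma aux_split {p : ℕ} (h : Fin (p + 1) → ℝ) (k : Fin (p + 1)) :
    ∏ j, h j =
      (∏ j ∈ Finset.univ.filter (fun j => j < k), h j) * h k *
        ∏ j ∈ Finset.univ.filter (fun j => k < j), h j := by
  rw [Fin.prod_univ_succAbove h k, aux_prod_succAbove h k]
  ring

lemma aux_shift {p : ℕ} (g : Fin (p + 2) → ℝ) (k : Fin (p + 1)) :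
    ∏ j : Fin (p + 1), g ((k.succ).succAbove j) =
      (∏ j ∈ Finset.univ.filter (fun j => j < k), g (Fin.succ j)) * g 0 *
        ∏ j ∈ Finset.univ.filter (fun j => k < j), g (Fin.succ j) := by
  rw [Fin.prod_univ_succ]
  simp only [Fin.succ_succAbove_zero, Fin.succ_succAbove_succ]
  rw [aux_prod_succAbove (fun j => g (Fin.succ j)) k]
  ring

theorem stmt14 {X : Type*} (p : ℕ) (f : Fin (p + 1) → X → ℝ) (χ : X → ℝ)
    (x : Fin (p + 2) → X) :
    cob (fun y : Fin (p + 1) → X => (∏ i, χ (y i)) * altAvg (p + 1) (tensorF f) y) x =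
      (∏ k : Fin (p + 1), χ (x k.succ)) * cob (altAvg (p + 1) (tensorF f)) x +
        ∑ k : Fin (p + 1), (-1 : ℝ) ^ (k : ℕ) *
          (∏ j ∈ Finset.univ.filter (fun j => j < k), χ (x j.succ)) *
          (χ (x k.succ) - χ (x 0)) *
          (∏ j ∈ Finset.univ.filter (fun j => k < j), χ (x j.succ)) *
          altAvg (p + 1) (tensorF f) (x ∘ (k.succ).succAbove) := by
  set F := altAvg (p + 1) (tensorF f) with hF
  simp only [cob, Function.comp_apply]
  have hterm : ∀ k : Fin (p + 1),
      (-1 : ℝ) ^ (((k.succ : Fin (p + 2))) : ℕ) *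
          ((∏ j : Fin (p + 1), χ (x ((k.succ).succAbove j))) * F (x ∘ (k.succ).succAbove)) =
        (∏ j : Fin (p + 1), χ (x j.succ)) *
            ((-1 : ℝ) ^ (((k.succ : Fin (p + 2))) : ℕ) * F (x ∘ (k.succ).succAbove)) +
          (-1 : ℝ) ^ (k : ℕ) *
            (∏ j ∈ Finset.univ.filter (fun j => j < k), χ (x j.succ)) *
            (χ (x k.succ) - χ (x 0)) *
            (∏ j ∈ Finset.univ.filter (fun j => k < j), χ (x j.succ)) *
            F (x ∘ (k.succ).succAbove) := by
    intro k
    have hA : ∏ j : Fin (p + 1), χ (x ((k.succ).succAbove j)) =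
        (∏ j ∈ Finset.univ.filter (fun j => j < k), χ (x (Fin.succ j))) * χ (x 0) *
          ∏ j ∈ Finset.univ.filter (fun j => k < j), χ (x (Fin.succ j)) :=
      aux_shift (fun i => χ (x i)) k
    have hP : ∏ j : Fin (p + 1), χ (x (Fin.succ j)) =
        (∏ j ∈ Finset.univ.filter (fun j => j < k), χ (x (Fin.succ j))) * χ (x (Fin.succ k)) *
          ∏ j ∈ Finset.univ.filter (fun j => k < j), χ (x (Fin.succ j)) :=
      aux_split (fun j => χ (x (Fin.succ j))) k
    have hpow : ((-1 : ℝ)) ^ (((k.succ : Fin (p + 2))) : ℕ) = -(-1 : ℝ) ^ (k : ℕ) := by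
      rw [Fin.val_succ, pow_succ]; ring
    rw [hA, hP, hpow]
    ring
  rw [Fin.sum_univ_succ, Fin.sum_univ_succ (f := fun i : Fin (p + 2) =>
    (-1 : ℝ) ^ (i : ℕ) * F (x ∘ i.succAbove)),
    Finset.sum_congr rfl (fun k _ => hterm k), Finset.sum_add_distrib, mul_add,
    Finset.mul_sum]
  have h0 : (∏ j : Fin (p + 1), χ (x (Fin.succAbove 0 j))) =
      ∏ j : Fin (p + 1), χ (x j.succ) := by
    simp [Fin.succAbove_zero]
  rw [h0]
  ring
end

section
/- Let W ⊂ X with 0 < μ(W) < ∞, and for f_0,...,f_p : X → ℝ bounded Borel define Ψ F(x_0,...,x_{p-1}) := (1/μ(W)) ∫_W F(t,x_0,...,x_{p-1}) μ(dt). Then Ψ(Alt_{p+1}(f_0 ⊗ ··· ⊗ f_p)) = (1/(p+1)) ∑_{k=0}^{p} (-1)^k ((1/μ(W)) ∫_W f_k dμ) · Alt_p(f_0 ⊗ ··· ⊗ f̂_k ⊗ ··· ⊗ f_p). In particular, Ψ maps antisymmetrized tensor products of p+1 functions to linear combinations of antisymmetrized tensor products of p functions. -/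
open Finset

open MeasureTheory

theorem stmt17 {X : Type*} [MeasurableSpace X] (μ : Measure X) (p : ℕ) (hp : 1 ≤ p)
    (W : Set X) (hW : MeasurableSet W) (hpos : 0 < μ W) (hfin : μ W < ⊤)
    (f : Fin (p + 1) → X → ℝ) (hmeas : ∀ i, Measurable (f i))
    (C : ℝ) (hbd : ∀ i x, |f i x| ≤ C) :
    (fun x : Fin p → X =>
        (μ W).toReal⁻¹ * ∫ t in W, altAvg (p + 1) (tensorF f) (Fin.cons t x) ∂μ) =
      fun x => ((p : ℝ) + 1)⁻¹ * ∑ k : Fin (p + 1), (-1 : ℝ) ^ (k : ℕ) *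
        ((μ W).toReal⁻¹ * ∫ t in W, f k t ∂μ) *
        altAvg p (tensorF fun j => f (k.succAbove j)) x := by
  classical
  funext x
  set c := (μ W).toReal⁻¹ with hc
  -- measurability of each factor
  have hm1 : ∀ (m : Fin (p + 1)) (i : Fin (p + 1)),
      Measurable fun t : X => f i (Fin.cons (α := fun _ => X) t x m) := by
    intro m i
    induction m using Fin.cases with
    | zero => simpa using hmeas i
    | succ j => simp only [Fin.cons_succ]; exact measurable_const
  have hmP : ∀ σ : Equiv.Perm (Fin (p + 1)),
      Measurable fun t : X => ∏ i, f i (Fin.cons (α := fun _ => X) t x (σ i)) :=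
    fun σ => Finset.measurable_prod _ fun i _ => hm1 (σ i) i
  have hint : ∀ σ : Equiv.Perm (Fin (p + 1)),
      Integrable (fun t : X =>
        ((Equiv.Perm.sign σ : ℤ) : ℝ) * ∏ i, f i (Fin.cons (α := fun _ => X) t x (σ i))) (μ.restrict W) := by
    intro σ
    refine Measure.integrableOn_of_bounded (M := C ^ (p + 1)) hfin.ne
      (((hmP σ).const_mul _).aestronglyMeasurable) ?_
    filter_upwards with t
    have h1 : ‖((Equiv.Perm.sign σ : ℤ) : ℝ)‖ = 1 := by
      rcases Int.units_eq_one_or (Equiv.Perm.sign σ) with h | h <;> simp [h]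
    rw [norm_mul, h1, one_mul, Real.norm_eq_abs, Finset.abs_prod]
    calc ∏ i, |f i (Fin.cons (α := fun _ => X) t x (σ i))| ≤ ∏ _i : Fin (p + 1), C :=
          Finset.prod_le_prod (fun i _ => abs_nonneg _) (fun i _ => hbd i _)
      _ = C ^ (p + 1) := by simp
  -- the reindexing bijection
  set Φ : Fin (p + 1) × Equiv.Perm (Fin p) → Equiv.Perm (Fin (p + 1)) :=
    fun kτ => Equiv.Perm.decomposeFin.symm (0, kτ.2) * kτ.1.cycleRange with hΦ
  have hΦ0 : ∀ k τ, Φ (k, τ) k = 0 := by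
    intro k τ
    simp [Φ, Equiv.Perm.mul_apply, Fin.cycleRange_self]
  have hΦs : ∀ k τ j, Φ (k, τ) (k.succAbove j) = (τ j).succ := by
    intro k τ j
    simp [Φ, Equiv.Perm.mul_apply, Fin.cycleRange_succAbove]
  have hΦinj : Function.Injective Φ := by
    rintro ⟨k, τ⟩ ⟨k', τ'⟩ h
    have hk : k = k' := by
      have h1 : Φ (k', τ') k = 0 := by rw [← h]; exact hΦ0 k τ
      have h2 : Φ (k', τ') k' = 0 := hΦ0 k' τ'
      exact (Φ (k', τ')).injective (h1.trans h2.symm)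
    subst hk
    have hτ : τ = τ' := by
      ext j
      have h1 : (τ j).succ = (τ' j).succ := by
        rw [← hΦs k τ j, ← hΦs k τ' j, h]
      exact Fin.val_eq_of_eq (Fin.succ_injective _ h1)
    rw [hτ]
  have hΦbij : Function.Bijective Φ :=
    (Fintype.bijective_iff_injective_and_card Φ).2 ⟨hΦinj, by
      simp [Fintype.card_perm, Nat.factorial_succ]⟩
  have hΦsign : ∀ k τ, ((Equiv.Perm.sign (Φ (k, τ)) : ℤ) : ℝ) =
      (-1 : ℝ) ^ (k : ℕ) * ((Equiv.Perm.sign τ : ℤ) : ℝ) := by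
    intro k τ
    have : Equiv.Perm.sign (Φ (k, τ)) = (-1) ^ (k : ℕ) * Equiv.Perm.sign τ := by
      simp [Φ, Fin.sign_cycleRange, mul_comm]
    rw [this]
    push_cast
    ring
  -- pull the sum out of the integral
  have key : (∫ t in W, altAvg (p + 1) (tensorF f) (Fin.cons t x) ∂μ)
      = ((p + 1).factorial : ℝ)⁻¹ * ∑ σ : Equiv.Perm (Fin (p + 1)),
          ((Equiv.Perm.sign σ : ℤ) : ℝ) * ∫ t in W, ∏ i, f i (Fin.cons (α := fun _ => X) t x (σ i)) ∂μ := by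
    simp only [altAvg, tensorF, Function.comp_apply]
    rw [MeasureTheory.integral_const_mul]
    congr 1
    rw [integral_finset_sum _ fun σ _ => hint σ]
    exact Finset.sum_congr rfl fun σ _ => (MeasureTheory.integral_const_mul _ _)
  -- compute each reindexed term
  have hterm : ∀ (k : Fin (p + 1)) (τ : Equiv.Perm (Fin p)),
      ((Equiv.Perm.sign (Φ (k, τ)) : ℤ) : ℝ) *
          ∫ t in W, ∏ i, f i (Fin.cons (α := fun _ => X) t x (Φ (k, τ) i)) ∂μ
        = (-1 : ℝ) ^ (k : ℕ) * ((Equiv.Perm.sign τ : ℤ) : ℝ) *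
            ((∫ t in W, f k t ∂μ) * ∏ j, f (k.succAbove j) (x (τ j))) := by
    intro k τ
    rw [hΦsign]
    congr 1
    have hprod : ∀ t : X, (∏ i, f i (Fin.cons (α := fun _ => X) t x (Φ (k, τ) i)))
        = f k t * ∏ j, f (k.succAbove j) (x (τ j)) := by
      intro t
      rw [Fin.prod_univ_succAbove (fun i => f i (Fin.cons (α := fun _ => X) t x (Φ (k, τ) i))) k]
      rw [hΦ0, Fin.cons_zero]
      congr 1
      exact Finset.prod_congr rfl fun j _ => by rw [hΦs, Fin.cons_succ]
    simp only [hprod]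
    exact MeasureTheory.integral_mul_const _ _
  -- reindex the sum
  have reindex : (∑ σ : Equiv.Perm (Fin (p + 1)),
      ((Equiv.Perm.sign σ : ℤ) : ℝ) * ∫ t in W, ∏ i, f i (Fin.cons (α := fun _ => X) t x (σ i)) ∂μ)
      = ∑ k : Fin (p + 1), ∑ τ : Equiv.Perm (Fin p),
          (-1 : ℝ) ^ (k : ℕ) * ((Equiv.Perm.sign τ : ℤ) : ℝ) *
            ((∫ t in W, f k t ∂μ) * ∏ j, f (k.succAbove j) (x (τ j))) := by
    rw [← Fintype.sum_bijective Φ hΦbij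
      (fun kτ => ((Equiv.Perm.sign (Φ kτ) : ℤ) : ℝ) *
        ∫ t in W, ∏ i, f i (Fin.cons (α := fun _ => X) t x (Φ kτ i)) ∂μ)
      (fun σ => ((Equiv.Perm.sign σ : ℤ) : ℝ) *
        ∫ t in W, ∏ i, f i (Fin.cons (α := fun _ => X) t x (σ i)) ∂μ)
      (fun kτ => rfl)]
    rw [Fintype.sum_prod_type]
    exact Finset.sum_congr rfl fun k _ => Finset.sum_congr rfl fun τ _ => hterm k τ
  rw [key, reindex]
  simp only [altAvg, tensorF, Function.comp_apply]
  have hfact : ((p + 1).factorial : ℝ) = ((p : ℝ) + 1) * (p.factorial : ℝ) := by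
    rw [Nat.factorial_succ]
    push_cast
    ring
  simp only [Finset.mul_sum]
  refine Finset.sum_congr rfl fun k _ => ?_
  refine Finset.sum_congr rfl fun τ _ => ?_
  rw [hfact, mul_inv]
  ring
end

section
/- Let (X, ρ, μ) be a metric measure space, j : X² → (0,∞] Borel, and suppose f_1,...,f_p : X → ℝ are bounded with sup_{x∈X} ∫_X (f_i(x)−f_i(y))² j(x,y) μ(dy) < ∞ for each i, and g : X → ℝ is bounded. Then for every x_0 ∈ X, ∫_{X^p} (ḡ · δ_{p-1}Alt_p(f_1⊗···⊗f_p))(x_0,x_1,...,x_p)² ∏_{i=1}^{p} j(x_0,x_i) μ(dx_1)···μ(dx_p) ≤ ‖g‖_∞² ∏_{i=1}^{p} ∫_X (f_i(y)−f_i(x_0))² j(x_0,y) μ(dy), where ḡ(x_0,...,x_p) := (1/(p+1)) ∑_{i=0}^{p} g(x_i). -/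
open Finset

open MeasureTheory

-- Step A : altAvg as determinant
lemma altAvg_eq_det {X : Type*} (p : ℕ) (f : Fin p → X → ℝ) (z : Fin p → X) :
    altAvg p (tensorF f) z = (p.factorial : ℝ)⁻¹ * Matrix.det (Matrix.of fun k i => f i (z k)) := by
  rw [Matrix.det_apply']
  rfl

lemma cob_altAvg_eq {X : Type*} (p : ℕ) (f : Fin p → X → ℝ) (x₀ : X) (x : Fin p → X) :
    cob (altAvg p (tensorF f)) (Fin.cons x₀ x) =
      (p.factorial : ℝ)⁻¹ * ∑ σ : Equiv.Perm (Fin p), ((Equiv.Perm.sign σ : ℤ) : ℝ) *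
        ∏ k, (f k (x (σ k)) - f k x₀) := by
  classical
  set y : Fin (p + 1) → X := Fin.cons x₀ x with hy
  set M : Matrix (Fin (p + 1)) (Fin (p + 1)) ℝ :=
    Matrix.of fun jj => Fin.cons 1 (fun i => f i (y jj)) with hM
  -- cob altAvg = (p!)⁻¹ det M
  have h1 : cob (altAvg p (tensorF f)) y = (p.factorial : ℝ)⁻¹ * M.det := by
    rw [Matrix.det_succ_column_zero]
    unfold cob
    rw [Finset.mul_sum]
    refine Finset.sum_congr rfl fun m _ => ?_
    rw [altAvg_eq_det]
    have hM0 : M m 0 = 1 := rfl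
    have hsub : (M.submatrix m.succAbove Fin.succ) = Matrix.of fun k i => f i ((y ∘ m.succAbove) k) := rfl
    rw [hM0, hsub]
    ring
  -- row reduction
  set q : Matrix (Fin (p + 1)) (Fin (p + 1)) ℝ :=
    Matrix.of fun jj kk => if kk = 0 ∧ jj ≠ 0 then (-1 : ℝ) else 0 with hq
  set P : Matrix (Fin (p + 1)) (Fin (p + 1)) ℝ := 1 + q with hP
  have hPdet : P.det = 1 := by
    have ht : P.BlockTriangular OrderDual.toDual := by
      intro i j hij
      have hij' : i < j := hij
      have h1 : (1 : Matrix (Fin (p+1)) (Fin (p+1)) ℝ) i j = 0 :=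
        Matrix.one_apply_ne hij'.ne
      have h2 : q i j = 0 := by
        simp only [hq, Matrix.of_apply, ite_eq_right_iff, and_imp]
        intro hj0 _
        exact absurd (hj0 ▸ hij') (by simp)
      simp [hP, Matrix.add_apply, h1, h2]
    rw [Matrix.det_of_lowerTriangular P ht]
    have : ∀ i, P i i = 1 := by
      intro i
      have h2 : q i i = 0 := by
        simp only [hq, Matrix.of_apply, ite_eq_right_iff, and_imp]
        intro hi0 hne; exact absurd hi0 hne
      simp [hP, Matrix.add_apply, h2, Matrix.one_apply_eq]
    simp [this]
  have hqM : ∀ jj kk, (q * M) jj kk = if jj ≠ 0 then -(M 0 kk) else 0 := by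
    intro jj kk
    rw [Matrix.mul_apply]
    rw [Finset.sum_eq_single 0]
    · by_cases h : jj = 0 <;> simp [hq, h]
    · intro b _ hb
      simp [hq, hb]
    · simp
  have hPM0 : ∀ kk, (P * M) 0 kk = M 0 kk := by
    intro kk
    rw [hP, Matrix.add_mul, Matrix.one_mul, Matrix.add_apply, hqM]
    simp
  have hPMs : ∀ (t : Fin p) kk, (P * M) t.succ kk = M t.succ kk - M 0 kk := by
    intro t kk
    rw [hP, Matrix.add_mul, Matrix.one_mul, Matrix.add_apply, hqM]
    simp [Fin.succ_ne_zero, sub_eq_add_neg]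
  have hdetPM : M.det = (P * M).det := by
    rw [Matrix.det_mul, hPdet, one_mul]
  -- expand det (P*M) along column 0
  have h2 : (P * M).det = Matrix.det (Matrix.of fun (k : Fin p) (i : Fin p) => f i (x k) - f i x₀) := by
    rw [Matrix.det_succ_column_zero]
    rw [Finset.sum_eq_single 0]
    · have h00 : (P * M) 0 0 = 1 := by rw [hPM0]; rfl
      rw [h00]
      have : ((P * M).submatrix (Fin.succAbove 0) Fin.succ) =
          Matrix.of fun (k : Fin p) (i : Fin p) => f i (x k) - f i x₀ := by
        ext k i
        simp only [Matrix.submatrix_apply, Fin.succAbove_zero]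
        rw [hPMs]
        show f i (y k.succ) - f i (y 0) = _
        simp [hy]
      rw [this]
      simp
    · intro b _ hb
      obtain ⟨t, rfl⟩ := Fin.eq_succ_of_ne_zero hb
      have : (P * M) t.succ 0 = 0 := by
        rw [hPMs]
        show (1 : ℝ) - 1 = 0
        ring
      rw [this]; ring
    · simp
  rw [h1, hdetPM, h2, Matrix.det_apply']
  rfl

open MeasureTheory

lemma lintegral_pi_prod {X : Type*} [MeasurableSpace X] (μ : Measure X) [SigmaFinite μ] :
    ∀ (n : ℕ) (u : Fin n → X → ENNReal), (∀ i, Measurable (u i)) →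
      ∫⁻ x : Fin n → X, ∏ i, u i (x i) ∂(Measure.pi fun _ : Fin n => μ) = ∏ i, ∫⁻ y, u i y ∂μ := by
  intro n
  induction n with
  | zero =>
      intro u hu
      simp [lintegral_const, Measure.pi_univ]
  | succ n ih =>
      intro u hu
      have hmeas : Measurable fun z : X × (Fin n → X) =>
          u 0 z.1 * ∏ i, u i.succ (z.2 i) :=
        ((hu 0).comp measurable_fst).mul
          (Finset.measurable_prod _ fun i _ =>
            (hu i.succ).comp ((measurable_pi_apply i).comp measurable_snd))
      have key := (measurePreserving_piFinSuccAbove (fun _ : Fin (n+1) => μ) 0).lintegral_comp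
        hmeas
      have heq : ∀ x : Fin (n+1) → X,
          (fun z : X × (Fin n → X) => u 0 z.1 * ∏ i, u i.succ (z.2 i))
            (MeasurableEquiv.piFinSuccAbove (fun _ => X) 0 x) = ∏ i, u i (x i) := by
        intro x
        rw [Fin.prod_univ_succ]
        simp [MeasurableEquiv.piFinSuccAbove, Fin.succAbove_zero, Fin.tail]
      calc ∫⁻ x : Fin (n+1) → X, ∏ i, u i (x i) ∂(Measure.pi fun _ => μ)
          = ∫⁻ x : Fin (n+1) → X, (fun z : X × (Fin n → X) => u 0 z.1 * ∏ i, u i.succ (z.2 i))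
              (MeasurableEquiv.piFinSuccAbove (fun _ => X) 0 x) ∂(Measure.pi fun _ => μ) := by
            refine lintegral_congr fun x => (heq x).symm
        _ = ∫⁻ z : X × (Fin n → X), u 0 z.1 * ∏ i, u i.succ (z.2 i)
              ∂(μ.prod (Measure.pi fun _ : Fin n => μ)) := key
        _ = (∫⁻ y, u 0 y ∂μ) * (∫⁻ z : Fin n → X, ∏ i : Fin n, u i.succ (z i) ∂(Measure.pi fun _ : Fin n => μ)) :=
            lintegral_prod_mul (hu 0).aemeasurable
              (Finset.measurable_prod (univ : Finset (Fin n)) fun (i : Fin n) _ =>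
                (hu i.succ).comp (measurable_pi_apply i)).aemeasurable
        _ = (∫⁻ y, u 0 y ∂μ) * ∏ i : Fin n, ∫⁻ y, u i.succ y ∂μ := by
            rw [ih (fun i => u i.succ) (fun i => hu i.succ)]
        _ = ∏ i : Fin (n+1), ∫⁻ y, u i y ∂μ :=
            (Fin.prod_univ_succ fun i => ∫⁻ y, u i y ∂μ).symm



theorem stmt18 {X : Type*} [MeasurableSpace X] (μ : Measure X) [SigmaFinite μ]
    (p : ℕ) (hp : 1 ≤ p)
    (j : X → X → ℝ) (hj : Measurable (Function.uncurry j)) (hjpos : ∀ x y, 0 < j x y)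
    (f : Fin p → X → ℝ) (hfmeas : ∀ i, Measurable (f i))
    (hfbd : ∀ i, ∃ C, ∀ x, |f i x| ≤ C)
    (hffin : ∀ i, ∃ C : ENNReal, C < ⊤ ∧ ∀ x : X,
      (∫⁻ y, ENNReal.ofReal ((f i x - f i y) ^ 2 * j x y) ∂μ) ≤ C)
    (g : X → ℝ) (hgmeas : Measurable g) (Cg : ℝ) (hg : ∀ x, |g x| ≤ Cg)
    (x₀ : X) :
    (∫⁻ x : Fin p → X,
        ENNReal.ofReal
          ((gbar p g (Fin.cons x₀ x) * cob (altAvg p (tensorF f)) (Fin.cons x₀ x)) ^ 2 *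
            ∏ i, j x₀ (x i)) ∂(Measure.pi fun _ : Fin p => μ)) ≤
      ENNReal.ofReal (Cg ^ 2) *
        ∏ i, ∫⁻ y, ENNReal.ofReal ((f i y - f i x₀) ^ 2 * j x₀ y) ∂μ := by
  classical
  have hCg : 0 ≤ Cg := le_trans (abs_nonneg _) (hg x₀)
  set F : Fin p → X → ℝ := fun i y => f i y - f i x₀ with hF
  set h : X → ℝ := fun y => j x₀ y with hh
  have hhmeas : Measurable h := hj.comp (measurable_const.prodMk measurable_id)
  have hhnn : ∀ y, 0 ≤ h y := fun y => (hjpos x₀ y).le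
  set A : Fin p → ENNReal :=
    fun i => ∫⁻ y, ENNReal.ofReal ((f i y - f i x₀) ^ 2 * j x₀ y) ∂μ with hA
  set u : Fin p → Fin p → X → ℝ := fun a b y => |F a y| * |F b y| * h y with hu
  have hunn : ∀ a b y, 0 ≤ u a b y := fun a b y =>
    mul_nonneg (mul_nonneg (abs_nonneg _) (abs_nonneg _)) (hhnn y)
  set c : ℝ := ((p.factorial : ℝ)⁻¹) ^ 2 with hc
  have hcnn : 0 ≤ c := by positivity
  set S : (Fin p → X) → ℝ :=
    fun x => (p.factorial : ℝ)⁻¹ * ∑ σ : Equiv.Perm (Fin p), ∏ k, |F k (x (σ k))| with hS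
  -- |gbar| ≤ Cg
  have hgbar : ∀ z : Fin (p + 1) → X, |gbar p g z| ≤ Cg := by
    intro z
    have hp1 : (0 : ℝ) < (p : ℝ) + 1 := by positivity
    have habs : |∑ i, g (z i)| ≤ ((p : ℝ) + 1) * Cg := by
      calc |∑ i, g (z i)| ≤ ∑ i, |g (z i)| := Finset.abs_sum_le_sum_abs _ _
        _ ≤ ∑ _i : Fin (p + 1), Cg := Finset.sum_le_sum fun i _ => hg _
        _ = ((p : ℝ) + 1) * Cg := by
            rw [Finset.sum_const, Finset.card_univ, Fintype.card_fin, nsmul_eq_mul]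
            push_cast; ring
    show |((p : ℝ) + 1)⁻¹ * ∑ i, g (z i)| ≤ Cg
    rw [abs_mul, abs_of_pos (inv_pos.2 hp1)]
    calc ((p : ℝ) + 1)⁻¹ * |∑ i, g (z i)| ≤ ((p : ℝ) + 1)⁻¹ * (((p : ℝ) + 1) * Cg) :=
          mul_le_mul_of_nonneg_left habs (inv_pos.2 hp1).le
      _ = Cg := by field_simp
  -- |cob| ≤ S
  have hD : ∀ x : Fin p → X, |cob (altAvg p (tensorF f)) (Fin.cons x₀ x)| ≤ S x := by
    intro x
    rw [cob_altAvg_eq]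
    rw [abs_mul, abs_inv, Nat.abs_cast]
    refine mul_le_mul_of_nonneg_left ?_ (by positivity)
    calc |∑ σ : Equiv.Perm (Fin p), ((Equiv.Perm.sign σ : ℤ) : ℝ) * ∏ k, (f k (x (σ k)) - f k x₀)|
        ≤ ∑ σ : Equiv.Perm (Fin p),
            |((Equiv.Perm.sign σ : ℤ) : ℝ) * ∏ k, (f k (x (σ k)) - f k x₀)| :=
          Finset.abs_sum_le_sum_abs _ _
      _ = ∑ σ : Equiv.Perm (Fin p), ∏ k, |F k (x (σ k))| := by
          refine Finset.sum_congr rfl fun σ _ => ?_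
          rw [abs_mul, Finset.abs_prod]
          have hsgn : |((Equiv.Perm.sign σ : ℤ) : ℝ)| = 1 := by
            rcases Int.units_eq_one_or (Equiv.Perm.sign σ) with hs | hs <;> simp [hs]
          rw [hsgn, one_mul]
  -- per-term product identity
  have hterm : ∀ (x : Fin p → X) (σ τ : Equiv.Perm (Fin p)),
      (∏ k, |F k (x (σ k))|) * (∏ k, |F k (x (τ k))|) * (∏ i, h (x i)) =
        ∏ m, u (σ⁻¹ m) (τ⁻¹ m) (x m) := by
    intro x σ τ
    have e1 : (∏ m, |F (σ⁻¹ m) (x m)|) = ∏ k, |F k (x (σ k))| := by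
      rw [← Equiv.prod_comp σ fun m => |F (σ⁻¹ m) (x m)|]
      simp
    have e2 : (∏ m, |F (τ⁻¹ m) (x m)|) = ∏ k, |F k (x (τ k))| := by
      rw [← Equiv.prod_comp τ fun m => |F (τ⁻¹ m) (x m)|]
      simp
    rw [← e1, ← e2, ← Finset.prod_mul_distrib, ← Finset.prod_mul_distrib]
  -- pointwise bound
  have hpoint : ∀ x : Fin p → X,
      ENNReal.ofReal
          ((gbar p g (Fin.cons x₀ x) * cob (altAvg p (tensorF f)) (Fin.cons x₀ x)) ^ 2 *
            ∏ i, j x₀ (x i)) ≤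
        ENNReal.ofReal (Cg ^ 2) * (ENNReal.ofReal c *
          ∑ s : Equiv.Perm (Fin p) × Equiv.Perm (Fin p),
            ∏ m, ENNReal.ofReal (u (s.1⁻¹ m) (s.2⁻¹ m) (x m))) := by
    intro x
    set a := gbar p g (Fin.cons x₀ x)
    set d := cob (altAvg p (tensorF f)) (Fin.cons x₀ x)
    have hPr : (0 : ℝ) ≤ ∏ i, j x₀ (x i) := Finset.prod_nonneg fun i _ => (hjpos _ _).le
    have hSnn : 0 ≤ S x := le_trans (abs_nonneg _) (hD x)
    have h1 : (a * d) ^ 2 * ∏ i, j x₀ (x i) ≤ Cg ^ 2 * (S x ^ 2 * ∏ i, j x₀ (x i)) := by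
      have had : |a * d| ≤ Cg * S x := by
        rw [abs_mul]
        exact mul_le_mul (hgbar _) (hD x) (abs_nonneg _) hCg
      have h2 : (a * d) ^ 2 ≤ (Cg * S x) ^ 2 := by
        calc (a * d) ^ 2 = |a * d| ^ 2 := (sq_abs _).symm
          _ ≤ (Cg * S x) ^ 2 := pow_le_pow_left₀ (abs_nonneg _) had 2
      calc (a * d) ^ 2 * ∏ i, j x₀ (x i) ≤ (Cg * S x) ^ 2 * ∏ i, j x₀ (x i) :=
            mul_le_mul_of_nonneg_right h2 hPr
        _ = Cg ^ 2 * (S x ^ 2 * ∏ i, j x₀ (x i)) := by ring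
    have h3 : S x ^ 2 * ∏ i, j x₀ (x i) =
        c * ∑ s : Equiv.Perm (Fin p) × Equiv.Perm (Fin p),
          ∏ m, u (s.1⁻¹ m) (s.2⁻¹ m) (x m) := by
      calc S x ^ 2 * ∏ i, j x₀ (x i)
          = c * ((∑ σ : Equiv.Perm (Fin p), ∏ k, |F k (x (σ k))|) *
              ((∑ τ : Equiv.Perm (Fin p), ∏ k, |F k (x (τ k))|) * ∏ i, h (x i))) := by
            show ((p.factorial : ℝ)⁻¹ * ∑ σ : Equiv.Perm (Fin p), ∏ k, |F k (x (σ k))|) ^ 2 *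
              ∏ i, h (x i) = _
            simp only [hc]; ring
        _ = c * ∑ σ : Equiv.Perm (Fin p), ∑ τ : Equiv.Perm (Fin p),
              (∏ k, |F k (x (σ k))|) * (∏ k, |F k (x (τ k))|) * ∏ i, h (x i) := by
            congr 1
            simp only [Finset.sum_mul, Finset.mul_sum]
            refine Finset.sum_congr rfl fun σ _ => Finset.sum_congr rfl fun τ _ => by ring
        _ = c * ∑ σ : Equiv.Perm (Fin p), ∑ τ : Equiv.Perm (Fin p),
              ∏ m, u (σ⁻¹ m) (τ⁻¹ m) (x m) := by
            congr 1
            exact Finset.sum_congr rfl fun σ _ =>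
              Finset.sum_congr rfl fun τ _ => hterm x σ τ
        _ = c * ∑ s : Equiv.Perm (Fin p) × Equiv.Perm (Fin p),
              ∏ m, u (s.1⁻¹ m) (s.2⁻¹ m) (x m) := by
            rw [Fintype.sum_prod_type]
    calc ENNReal.ofReal ((a * d) ^ 2 * ∏ i, j x₀ (x i))
        ≤ ENNReal.ofReal (Cg ^ 2 * (S x ^ 2 * ∏ i, j x₀ (x i))) :=
          ENNReal.ofReal_le_ofReal h1
      _ = ENNReal.ofReal (Cg ^ 2) * ENNReal.ofReal (S x ^ 2 * ∏ i, j x₀ (x i)) :=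
          ENNReal.ofReal_mul (by positivity)
      _ = ENNReal.ofReal (Cg ^ 2) * (ENNReal.ofReal c *
            ∑ s : Equiv.Perm (Fin p) × Equiv.Perm (Fin p),
              ∏ m, ENNReal.ofReal (u (s.1⁻¹ m) (s.2⁻¹ m) (x m))) := by
          rw [h3, ENNReal.ofReal_mul hcnn,
            ENNReal.ofReal_sum_of_nonneg
              (fun s _ => Finset.prod_nonneg fun m _ => hunn _ _ _)]
          congr 2
          exact Finset.sum_congr rfl fun s _ =>
            ENNReal.ofReal_prod_of_nonneg fun m _ => hunn _ _ _
  -- measurability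
  have humeas : ∀ a b : Fin p, Measurable fun y => ENNReal.ofReal (u a b y) := fun a b =>
    ENNReal.measurable_ofReal.comp
      ((((hfmeas a).sub measurable_const).abs.mul
        ((hfmeas b).sub measurable_const).abs).mul hhmeas)
  -- Cauchy-Schwarz
  have hCS : ∀ a b : Fin p,
      (∫⁻ y, ENNReal.ofReal (u a b y) ∂μ) ≤ A a ^ (1/2 : ℝ) * A b ^ (1/2 : ℝ) := by
    intro a b
    have hm1 : Measurable fun y => ENNReal.ofReal ((f a y - f a x₀) ^ 2 * j x₀ y) :=
      ENNReal.measurable_ofReal.comp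
        ((((hfmeas a).sub measurable_const).pow_const 2).mul hhmeas)
    have hm2 : Measurable fun y => ENNReal.ofReal ((f b y - f b x₀) ^ 2 * j x₀ y) :=
      ENNReal.measurable_ofReal.comp
        ((((hfmeas b).sub measurable_const).pow_const 2).mul hhmeas)
    have hpt : ∀ y, ENNReal.ofReal (u a b y) =
        ENNReal.ofReal ((f a y - f a x₀) ^ 2 * j x₀ y) ^ (1/2 : ℝ) *
        ENNReal.ofReal ((f b y - f b x₀) ^ 2 * j x₀ y) ^ (1/2 : ℝ) := by
      intro y
      rw [ENNReal.ofReal_rpow_of_nonneg (mul_nonneg (sq_nonneg _) (hjpos _ _).le) (by norm_num),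
          ENNReal.ofReal_rpow_of_nonneg (mul_nonneg (sq_nonneg _) (hjpos _ _).le) (by norm_num),
          ← ENNReal.ofReal_mul (Real.rpow_nonneg (mul_nonneg (sq_nonneg _) (hjpos _ _).le) _)]
      congr 1
      rw [← Real.sqrt_eq_rpow, ← Real.sqrt_eq_rpow,
          ← Real.sqrt_mul (mul_nonneg (sq_nonneg _) (hjpos _ _).le)]
      have huy : u a b y = |f a y - f a x₀| * |f b y - f b x₀| * j x₀ y := rfl
      have hsq : (f a y - f a x₀) ^ 2 * j x₀ y * ((f b y - f b x₀) ^ 2 * j x₀ y) =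
          (u a b y) ^ 2 := by
        rw [huy, mul_pow, mul_pow, sq_abs, sq_abs]; ring
      rw [hsq, Real.sqrt_sq (hunn a b y)]
    calc (∫⁻ y, ENNReal.ofReal (u a b y) ∂μ)
        = ∫⁻ y, ENNReal.ofReal ((f a y - f a x₀) ^ 2 * j x₀ y) ^ (1/2 : ℝ) *
            ENNReal.ofReal ((f b y - f b x₀) ^ 2 * j x₀ y) ^ (1/2 : ℝ) ∂μ :=
          lintegral_congr hpt
      _ ≤ A a ^ (1/2 : ℝ) * A b ^ (1/2 : ℝ) :=
          ENNReal.lintegral_mul_norm_pow_le hm1.aemeasurable hm2.aemeasurable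
            (by norm_num) (by norm_num) (by norm_num)
  -- product collapse
  have hcollapse : ∀ σ τ : Equiv.Perm (Fin p),
      (∏ m, A (σ⁻¹ m) ^ (1/2 : ℝ) * A (τ⁻¹ m) ^ (1/2 : ℝ)) = ∏ i, A i := by
    intro σ τ
    rw [Finset.prod_mul_distrib,
        Equiv.prod_comp σ⁻¹ (fun i => A i ^ (1/2 : ℝ)),
        Equiv.prod_comp τ⁻¹ (fun i => A i ^ (1/2 : ℝ)),
        ← Finset.prod_mul_distrib]
    refine Finset.prod_congr rfl fun i _ => ?_
    rw [← ENNReal.rpow_add_of_nonneg _ _ (by norm_num) (by norm_num)]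
    norm_num
  -- final computation
  have hNne : ((p.factorial : ENNReal)) ≠ 0 := Nat.cast_ne_zero.mpr (Nat.factorial_pos p).ne'
  have hNfin : ((p.factorial : ENNReal)) ≠ ⊤ := ENNReal.natCast_ne_top _
  calc (∫⁻ x : Fin p → X,
          ENNReal.ofReal
            ((gbar p g (Fin.cons x₀ x) * cob (altAvg p (tensorF f)) (Fin.cons x₀ x)) ^ 2 *
              ∏ i, j x₀ (x i)) ∂(Measure.pi fun _ : Fin p => μ))
      ≤ ∫⁻ x : Fin p → X, ENNReal.ofReal (Cg ^ 2) * (ENNReal.ofReal c *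
          ∑ s : Equiv.Perm (Fin p) × Equiv.Perm (Fin p),
            ∏ m, ENNReal.ofReal (u (s.1⁻¹ m) (s.2⁻¹ m) (x m)))
          ∂(Measure.pi fun _ : Fin p => μ) := lintegral_mono hpoint
    _ = ENNReal.ofReal (Cg ^ 2) * (ENNReal.ofReal c *
          ∑ s : Equiv.Perm (Fin p) × Equiv.Perm (Fin p),
            ∫⁻ x : Fin p → X, ∏ m, ENNReal.ofReal (u (s.1⁻¹ m) (s.2⁻¹ m) (x m))
              ∂(Measure.pi fun _ : Fin p => μ)) := by
        rw [lintegral_const_mul' _ _ ENNReal.ofReal_ne_top,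
          lintegral_const_mul' _ _ ENNReal.ofReal_ne_top,
          lintegral_finset_sum _ (fun s _ => Finset.measurable_prod _ fun m _ =>
            (humeas _ _).comp' (measurable_pi_apply m))]
    _ = ENNReal.ofReal (Cg ^ 2) * (ENNReal.ofReal c *
          ∑ s : Equiv.Perm (Fin p) × Equiv.Perm (Fin p),
            ∏ m, ∫⁻ y, ENNReal.ofReal (u (s.1⁻¹ m) (s.2⁻¹ m) y) ∂μ) := by
        congr 2
        exact Finset.sum_congr rfl fun s _ =>
          lintegral_pi_prod μ p _ (fun m => humeas _ _)
    _ ≤ ENNReal.ofReal (Cg ^ 2) * (ENNReal.ofReal c *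
          ∑ s : Equiv.Perm (Fin p) × Equiv.Perm (Fin p),
            ∏ m, A (s.1⁻¹ m) ^ (1/2 : ℝ) * A (s.2⁻¹ m) ^ (1/2 : ℝ)) := by
        gcongr with s _ m _
        exact hCS _ _
    _ = ENNReal.ofReal (Cg ^ 2) * (ENNReal.ofReal c *
          ∑ _s : Equiv.Perm (Fin p) × Equiv.Perm (Fin p), ∏ i, A i) := by
        congr 2
        exact Finset.sum_congr rfl fun s _ => hcollapse s.1 s.2
    _ = ENNReal.ofReal (Cg ^ 2) * ∏ i, A i := by
        rw [Finset.sum_const, Finset.card_univ, Fintype.card_prod, Fintype.card_perm,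
          Fintype.card_fin, nsmul_eq_mul]
        congr 1
        have hcval : ENNReal.ofReal c =
            (p.factorial : ENNReal)⁻¹ * (p.factorial : ENNReal)⁻¹ := by
          rw [hc, pow_two, ENNReal.ofReal_mul (by positivity),
            ENNReal.ofReal_inv_of_pos (by positivity), ENNReal.ofReal_natCast]
        rw [hcval]
        push_cast
        calc (p.factorial : ENNReal)⁻¹ * (p.factorial : ENNReal)⁻¹ *
              ((p.factorial : ENNReal) * (p.factorial : ENNReal) * ∏ i, A i)
            = ((p.factorial : ENNReal)⁻¹ * (p.factorial : ENNReal)) *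
              (((p.factorial : ENNReal)⁻¹ * (p.factorial : ENNReal)) * ∏ i, A i) := by ring
          _ = ∏ i, A i := by rw [ENNReal.inv_mul_cancel hNne hNfin]; ring
end
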